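/- Let σ > 0 and let L be the second-order differential operator acting on functions f : ℝ³ → ℝ (with variables (x,u,v)) of class C² by Lf(x,u,v) = (σ²/2)·∂²f/∂x² + (u·sin x − v·cos x)·∂f/∂x + cos(x)·∂f/∂u + sin(x)·∂f/∂v. Then for every C² function f : ℝ³ → ℝ that is 2π-periodic in x and compactly supported in (u,v), one has ∫_{ℝ²} ∫_0^{2π} Lf(x,u,v)·e^{−(u²+v²)/2} dx du dv = 0. Equivalently, the probability measure μ(dx du dv) = (dx/2π) ⊗ (e^{−u²/2}/√(2π)) du ⊗ (e^{−v²/2}/√(2π)) dv on S¹ × ℝ² satisfies ∫ Lf dμ = 0 for all such f, i.e., μ is infinitesimally invariant for the generator L of the self-repelling diffusion on the circle. -/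

import Mathlib

/-! With `ρ = e^{-(u²+v²)/2}`, the weighted generator is a divergence:
`Lf · ρ = ∂ₓA + ∂ᵤB + ∂ᵥC` for `A = (σ²/2 ∂ₓf + (u sin x - v cos x) f) ρ`, `B = cos x · f ρ`,
`C = sin x · f ρ`; the term `(u cos x + v sin x) f ρ` produced by `∂ₓA` cancels against the
derivatives of the Gaussian in `∂ᵤB + ∂ᵥC`. As `f` is compactly supported in `(u, v)`, the
integral over `ℝ²` is one over a square `[-r, r]²` on whose faces `B` and `C` vanish, while `A`
is `2π`-periodic in `x`. Integrating each divergence term first in its own variable (Fubini for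
continuous functions on a compact box) gives zero. -/

open Real MeasureTheory intervalIntegral

/-- First-order partial derivative of `f : ℝ³ → ℝ` in direction `d`. -/
noncomputable def pd3 (f : ℝ × ℝ × ℝ → ℝ) (d : ℝ × ℝ × ℝ) (p : ℝ × ℝ × ℝ) : ℝ :=
  fderiv ℝ f p d

/-- The generator of the self-repelling diffusion on the circle:
`Lf = (σ²/2)∂ₓₓf + (u·sin x − v·cos x)∂ₓf + cos(x)∂ᵤf + sin(x)∂ᵥf`,
where the coordinates of `p = (x,u,v)`. -/
noncomputable def circleGen (σ : ℝ) (f : ℝ × ℝ × ℝ → ℝ) (p : ℝ × ℝ × ℝ) : ℝ :=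
  σ ^ 2 / 2 * pd3 (pd3 f (1, 0, 0)) (1, 0, 0) p +
    (p.2.1 * Real.sin p.1 - p.2.2 * Real.cos p.1) * pd3 f (1, 0, 0) p +
    Real.cos p.1 * pd3 f (0, 1, 0) p +
    Real.sin p.1 * pd3 f (0, 0, 1) p

open Set

section PartialDerivative

variable {g : ℝ × ℝ × ℝ → ℝ}

lemma continuous_pd3 (hg : ContDiff ℝ 1 g) (d : ℝ × ℝ × ℝ) : Continuous (pd3 g d) :=
  (hg.continuous_fderiv one_ne_zero).clm_apply continuous_const

lemma contDiff_pd3 {n : ℕ} (hg : ContDiff ℝ (n + 1) g) (d : ℝ × ℝ × ℝ) :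
    ContDiff ℝ n (pd3 g d) :=
  (hg.fderiv_right le_rfl).clm_apply contDiff_const

lemma hasDerivAt_pd3_fst (hg : Differentiable ℝ g) (x u v : ℝ) :
    HasDerivAt (fun t => g (t, u, v)) (pd3 g (1, 0, 0) (x, u, v)) x :=
  (hg _).hasFDerivAt.comp_hasDerivAt x
    ((hasDerivAt_id x).prodMk (hasDerivAt_const x (u, v)))

lemma hasDerivAt_pd3_snd (hg : Differentiable ℝ g) (x u v : ℝ) :
    HasDerivAt (fun t => g (x, t, v)) (pd3 g (0, 1, 0) (x, u, v)) u :=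
  (hg _).hasFDerivAt.comp_hasDerivAt u
    ((hasDerivAt_const u x).prodMk ((hasDerivAt_id u).prodMk (hasDerivAt_const u v)))

lemma hasDerivAt_pd3_thd (hg : Differentiable ℝ g) (x u v : ℝ) :
    HasDerivAt (fun t => g (x, u, t)) (pd3 g (0, 0, 1) (x, u, v)) v :=
  (hg _).hasFDerivAt.comp_hasDerivAt v
    ((hasDerivAt_const v x).prodMk ((hasDerivAt_const v u).prodMk (hasDerivAt_id v)))

lemma pd3_eqOn_zero {U : Set (ℝ × ℝ × ℝ)} (hU : IsOpen U) (hg : EqOn g 0 U)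
    (d : ℝ × ℝ × ℝ) : EqOn (pd3 g d) 0 U := fun p hp => by
  simp [pd3, (Filter.eventuallyEq_of_mem (hU.mem_nhds hp) hg).fderiv_eq]

lemma pd3_add_fst {T : ℝ} (hg : ∀ x u v, g (x + T, u, v) = g (x, u, v))
    (d : ℝ × ℝ × ℝ) (x u v : ℝ) : pd3 g d (x + T, u, v) = pd3 g d (x, u, v) := by
  have hshift : (fun p => g (p + (T, 0, 0))) = g := funext fun ⟨x, u, v⟩ => by
    simpa using hg x u v
  have := fderiv_comp_add_right (𝕜 := ℝ) (f := g) (T, 0, 0) (x := (x, u, v))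
  rw [hshift] at this
  simp [pd3, this]

end PartialDerivative

section FundamentalTheorem

variable {g : ℝ × ℝ × ℝ → ℝ}

lemma integral_pd3_fst (hg : ContDiff ℝ 1 g) (a b u v : ℝ) :
    ∫ x in a..b, pd3 g (1, 0, 0) (x, u, v) = g (b, u, v) - g (a, u, v) :=
  integral_eq_sub_of_hasDerivAt
    (fun x _ => hasDerivAt_pd3_fst (hg.differentiable one_ne_zero) x u v)
    (((continuous_pd3 hg _).comp (by fun_prop)).intervalIntegrable _ _)

lemma integral_pd3_snd (hg : ContDiff ℝ 1 g) (a b x v : ℝ) :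
    ∫ u in a..b, pd3 g (0, 1, 0) (x, u, v) = g (x, b, v) - g (x, a, v) :=
  integral_eq_sub_of_hasDerivAt
    (fun u _ => hasDerivAt_pd3_snd (hg.differentiable one_ne_zero) x u v)
    (((continuous_pd3 hg _).comp (by fun_prop)).intervalIntegrable _ _)

lemma integral_pd3_thd (hg : ContDiff ℝ 1 g) (a b x u : ℝ) :
    ∫ v in a..b, pd3 g (0, 0, 1) (x, u, v) = g (x, u, b) - g (x, u, a) :=
  integral_eq_sub_of_hasDerivAt
    (fun v _ => hasDerivAt_pd3_thd (hg.differentiable one_ne_zero) x u v)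
    (((continuous_pd3 hg _).comp (by fun_prop)).intervalIntegrable _ _)

end FundamentalTheorem

section Box

variable {a₁ b₁ a₂ b₂ a₃ b₃ : ℝ}

lemma intervalIntegral_swap_of_continuous {F : ℝ → ℝ → ℝ} (hF : Continuous F.uncurry)
    (a b c d : ℝ) : ∫ x in a..b, ∫ y in c..d, F x y = ∫ y in c..d, ∫ x in a..b, F x y :=
  intervalIntegral_intervalIntegral_swap <|
    (hF.continuousOn.integrableOn_compact (isCompact_uIcc.prod isCompact_uIcc)).mono_set
      (prod_mono uIoc_subset_uIcc uIoc_subset_uIcc)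

lemma iteratedIntegral_add {G H : ℝ × ℝ × ℝ → ℝ} (hG : Continuous G) (hH : Continuous H) :
    ∫ u in a₂..b₂, ∫ v in a₃..b₃, ∫ x in a₁..b₁, (G (x, u, v) + H (x, u, v)) =
      (∫ u in a₂..b₂, ∫ v in a₃..b₃, ∫ x in a₁..b₁, G (x, u, v)) +
        ∫ u in a₂..b₂, ∫ v in a₃..b₃, ∫ x in a₁..b₁, H (x, u, v) := by
  have hx (K : ℝ × ℝ × ℝ → ℝ) (hK : Continuous K) (u v : ℝ) :
      IntervalIntegrable (fun x => K (x, u, v)) volume a₁ b₁ :=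
    Continuous.intervalIntegrable (by fun_prop) _ _
  have hv (K : ℝ × ℝ × ℝ → ℝ) (hK : Continuous K) (u : ℝ) :
      IntervalIntegrable (fun v => ∫ x in a₁..b₁, K (x, u, v)) volume a₃ b₃ :=
    Continuous.intervalIntegrable (by fun_prop) _ _
  have hu (K : ℝ × ℝ × ℝ → ℝ) (hK : Continuous K) :
      IntervalIntegrable (fun u => ∫ v in a₃..b₃, ∫ x in a₁..b₁, K (x, u, v)) volume a₂ b₂ :=
    Continuous.intervalIntegrable (by fun_prop) _ _
  simp only [integral_add (hx G hG _ _) (hx H hH _ _), integral_add (hv G hG _) (hv H hH _),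
    integral_add (hu G hG) (hu H hH)]

lemma iteratedIntegral_pd3_fst_eq_zero {A : ℝ × ℝ × ℝ → ℝ} (hA : ContDiff ℝ 1 A)
    (hface : ∀ u v, A (a₁, u, v) = A (b₁, u, v)) :
    ∫ u in a₂..b₂, ∫ v in a₃..b₃, ∫ x in a₁..b₁, pd3 A (1, 0, 0) (x, u, v) = 0 := by
  simp [integral_pd3_fst hA, hface]

lemma iteratedIntegral_pd3_snd_eq_zero {B : ℝ × ℝ × ℝ → ℝ} (hB : ContDiff ℝ 1 B)
    (hface : ∀ x v, B (x, a₂, v) = B (x, b₂, v)) :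
    ∫ u in a₂..b₂, ∫ v in a₃..b₃, ∫ x in a₁..b₁, pd3 B (0, 1, 0) (x, u, v) = 0 := by
  have hB' := continuous_pd3 hB (0, 1, 0)
  calc ∫ u in a₂..b₂, ∫ v in a₃..b₃, ∫ x in a₁..b₁, pd3 B (0, 1, 0) (x, u, v)
      = ∫ v in a₃..b₃, ∫ u in a₂..b₂, ∫ x in a₁..b₁, pd3 B (0, 1, 0) (x, u, v) :=
        intervalIntegral_swap_of_continuous (by fun_prop) _ _ _ _
    _ = ∫ v in a₃..b₃, ∫ x in a₁..b₁, ∫ u in a₂..b₂, pd3 B (0, 1, 0) (x, u, v) := by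
        congr 1 with v
        exact intervalIntegral_swap_of_continuous (by fun_prop) _ _ _ _
    _ = 0 := by simp [integral_pd3_snd hB, hface]

lemma iteratedIntegral_pd3_thd_eq_zero {C : ℝ × ℝ × ℝ → ℝ} (hC : ContDiff ℝ 1 C)
    (hface : ∀ x u, C (x, u, a₃) = C (x, u, b₃)) :
    ∫ u in a₂..b₂, ∫ v in a₃..b₃, ∫ x in a₁..b₁, pd3 C (0, 0, 1) (x, u, v) = 0 := by
  have hC' := continuous_pd3 hC (0, 0, 1)
  calc ∫ u in a₂..b₂, ∫ v in a₃..b₃, ∫ x in a₁..b₁, pd3 C (0, 0, 1) (x, u, v)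
      = ∫ u in a₂..b₂, ∫ x in a₁..b₁, ∫ v in a₃..b₃, pd3 C (0, 0, 1) (x, u, v) := by
        congr 1 with u
        exact intervalIntegral_swap_of_continuous (by fun_prop) _ _ _ _
    _ = 0 := by simp [integral_pd3_thd hC, hface]

theorem iteratedIntegral_divergence_eq_zero {A B C : ℝ × ℝ × ℝ → ℝ} (hA : ContDiff ℝ 1 A)
    (hB : ContDiff ℝ 1 B) (hC : ContDiff ℝ 1 C) (hA_face : ∀ u v, A (a₁, u, v) = A (b₁, u, v))
    (hB_face : ∀ x v, B (x, a₂, v) = B (x, b₂, v)) (hC_face : ∀ x u, C (x, u, a₃) = C (x, u, b₃)) :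
    ∫ u in a₂..b₂, ∫ v in a₃..b₃, ∫ x in a₁..b₁,
      (pd3 A (1, 0, 0) (x, u, v) + pd3 B (0, 1, 0) (x, u, v) + pd3 C (0, 0, 1) (x, u, v)) = 0 := by
  have hA' := continuous_pd3 hA (1, 0, 0)
  have hB' := continuous_pd3 hB (0, 1, 0)
  rw [iteratedIntegral_add (G := fun p => pd3 A (1, 0, 0) p + pd3 B (0, 1, 0) p) (by fun_prop)
      (continuous_pd3 hC _), iteratedIntegral_add hA' hB',
    iteratedIntegral_pd3_fst_eq_zero hA hA_face, iteratedIntegral_pd3_snd_eq_zero hB hB_face,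
    iteratedIntegral_pd3_thd_eq_zero hC hC_face, add_zero, add_zero]

end Box

section Generator

noncomputable def circleFluxX (σ : ℝ) (f : ℝ × ℝ × ℝ → ℝ) (p : ℝ × ℝ × ℝ) : ℝ :=
  (σ ^ 2 / 2 * pd3 f (1, 0, 0) p + (p.2.1 * sin p.1 - p.2.2 * cos p.1) * f p) *
    exp (-(p.2.1 ^ 2 + p.2.2 ^ 2) / 2)

noncomputable def circleFluxU (f : ℝ × ℝ × ℝ → ℝ) (p : ℝ × ℝ × ℝ) : ℝ :=
  cos p.1 * f p * exp (-(p.2.1 ^ 2 + p.2.2 ^ 2) / 2)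

noncomputable def circleFluxV (f : ℝ × ℝ × ℝ → ℝ) (p : ℝ × ℝ × ℝ) : ℝ :=
  sin p.1 * f p * exp (-(p.2.1 ^ 2 + p.2.2 ^ 2) / 2)

variable {σ : ℝ} {f : ℝ × ℝ × ℝ → ℝ}

lemma contDiff_circleFluxX (hf : ContDiff ℝ 2 f) : ContDiff ℝ 1 (circleFluxX σ f) := by
  have := contDiff_pd3 (n := 1) hf (1, 0, 0)
  have := hf.of_le one_le_two
  unfold circleFluxX
  fun_prop

lemma contDiff_circleFluxU (hf : ContDiff ℝ 1 f) : ContDiff ℝ 1 (circleFluxU f) := by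
  unfold circleFluxU
  fun_prop

lemma contDiff_circleFluxV (hf : ContDiff ℝ 1 f) : ContDiff ℝ 1 (circleFluxV f) := by
  unfold circleFluxV
  fun_prop

lemma pd3_circleFluxX (hf : ContDiff ℝ 2 f) (x u v : ℝ) :
    pd3 (circleFluxX σ f) (1, 0, 0) (x, u, v) =
      (σ ^ 2 / 2 * pd3 (pd3 f (1, 0, 0)) (1, 0, 0) (x, u, v) +
        (u * cos x + v * sin x) * f (x, u, v) +
        (u * sin x - v * cos x) * pd3 f (1, 0, 0) (x, u, v)) * exp (-(u ^ 2 + v ^ 2) / 2) := by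
  have hf₀ : Differentiable ℝ f := hf.differentiable two_ne_zero
  have hf₁ : Differentiable ℝ (pd3 f (1, 0, 0)) :=
    (contDiff_pd3 (n := 1) hf _).differentiable one_ne_zero
  have htrig : HasDerivAt (fun t => u * sin t - v * cos t) (u * cos x + v * sin x) x :=
    (((hasDerivAt_sin x).const_mul u).sub ((hasDerivAt_cos x).const_mul v)).congr_deriv (by ring)
  refine (hasDerivAt_pd3_fst ((contDiff_circleFluxX hf).differentiable one_ne_zero) x u v).unique ?_
  exact ((((hasDerivAt_pd3_fst hf₁ x u v).const_mul (σ ^ 2 / 2)).add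
    (htrig.mul (hasDerivAt_pd3_fst hf₀ x u v))).mul_const (exp (-(u ^ 2 + v ^ 2) / 2))).congr_deriv
      (by ring)

lemma pd3_circleFluxU (hf : ContDiff ℝ 1 f) (x u v : ℝ) :
    pd3 (circleFluxU f) (0, 1, 0) (x, u, v) =
      cos x * (pd3 f (0, 1, 0) (x, u, v) - u * f (x, u, v)) * exp (-(u ^ 2 + v ^ 2) / 2) := by
  refine (hasDerivAt_pd3_snd ((contDiff_circleFluxU hf).differentiable one_ne_zero) x u v).unique ?_
  exact (((hasDerivAt_pd3_snd (hf.differentiable one_ne_zero) x u v).const_mul (cos x)).mul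
    (((hasDerivAt_pow 2 u).add_const (v ^ 2)).fun_neg.div_const 2).exp).congr_deriv (by ring)

lemma pd3_circleFluxV (hf : ContDiff ℝ 1 f) (x u v : ℝ) :
    pd3 (circleFluxV f) (0, 0, 1) (x, u, v) =
      sin x * (pd3 f (0, 0, 1) (x, u, v) - v * f (x, u, v)) * exp (-(u ^ 2 + v ^ 2) / 2) := by
  refine (hasDerivAt_pd3_thd ((contDiff_circleFluxV hf).differentiable one_ne_zero) x u v).unique ?_
  exact (((hasDerivAt_pd3_thd (hf.differentiable one_ne_zero) x u v).const_mul (sin x)).mul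
    (((hasDerivAt_pow 2 v).const_add (u ^ 2)).fun_neg.div_const 2).exp).congr_deriv (by ring)

lemma circleGen_mul_exp (hf : ContDiff ℝ 2 f) (x u v : ℝ) :
    circleGen σ f (x, u, v) * exp (-(u ^ 2 + v ^ 2) / 2) =
      pd3 (circleFluxX σ f) (1, 0, 0) (x, u, v) + pd3 (circleFluxU f) (0, 1, 0) (x, u, v) +
        pd3 (circleFluxV f) (0, 0, 1) (x, u, v) := by
  rw [pd3_circleFluxX hf, pd3_circleFluxU (hf.of_le one_le_two),
    pd3_circleFluxV (hf.of_le one_le_two), circleGen]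
  ring

lemma circleFluxX_add_two_pi (hper : ∀ x u v, f (x + 2 * π, u, v) = f (x, u, v)) (x u v : ℝ) :
    circleFluxX σ f (x + 2 * π, u, v) = circleFluxX σ f (x, u, v) := by
  simp only [circleFluxX, pd3_add_fst hper, hper, sin_add_two_pi, cos_add_two_pi]

lemma circleGen_eqOn_zero {U : Set (ℝ × ℝ × ℝ)} (hU : IsOpen U) (hf : EqOn f 0 U) :
    EqOn (circleGen σ f) 0 U := fun p hp => by
  simp [circleGen, pd3_eqOn_zero hU hf _ hp,
    pd3_eqOn_zero hU (pd3_eqOn_zero hU hf (1, 0, 0)) _ hp]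

end Generator

lemma integral_eq_intervalIntegral_of_abs_ge {g : ℝ → ℝ} {r : ℝ}
    (hg : ∀ t, r ≤ |t| → g t = 0) : ∫ t, g t = ∫ t in -r..r, g t := by
  refine (integral_eq_integral_of_support_subset fun t ht => ?_).symm
  by_contra hmem
  refine ht (hg t ?_)
  rw [mem_Ioc, not_and_or, not_lt, not_le] at hmem
  rcases hmem with h | h
  · exact (le_neg_of_le_neg h).trans (neg_le_abs t)
  · exact h.le.trans (le_abs_self t)

lemma integral_integral_eq_intervalIntegral {G : ℝ → ℝ → ℝ} {r : ℝ}
    (hG : ∀ u v, r ≤ |u| ∨ r ≤ |v| → G u v = 0) :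
    ∫ u, ∫ v, G u v = ∫ u in -r..r, ∫ v in -r..r, G u v := by
  rw [integral_eq_intervalIntegral_of_abs_ge fun u hu => by simp [hG u _ (.inl hu)]]
  congr 1 with u
  exact integral_eq_intervalIntegral_of_abs_ge fun v hv => hG u v (.inr hv)

theorem stmt_19_general (σ : ℝ) (f : ℝ × ℝ × ℝ → ℝ)
    (hf : ContDiff ℝ 2 f)
    (hper : ∀ x u v : ℝ, f (x + 2 * π, u, v) = f (x, u, v))
    (hsupp : ∃ R : ℝ, ∀ x u v : ℝ, R < Real.sqrt (u ^ 2 + v ^ 2) → f (x, u, v) = 0) :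
    (∫ u : ℝ, ∫ v : ℝ, ∫ x in (0:ℝ)..(2 * π),
        circleGen σ f (x, u, v) * Real.exp (-(u ^ 2 + v ^ 2) / 2)) = 0 := by
  obtain ⟨R, hR⟩ := hsupp
  set U : Set (ℝ × ℝ × ℝ) := {p | R < √(p.2.1 ^ 2 + p.2.2 ^ 2)}
  have hU : IsOpen U := isOpen_lt continuous_const (by fun_prop)
  have hfU : EqOn f 0 U := fun p hp => hR p.1 p.2.1 p.2.2 hp
  set r := |R| + 1
  have hrU (x u v) (h : r ≤ |u| ∨ r ≤ |v|) : (x, u, v) ∈ U := by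
    have hRr : R < r := (le_abs_self R).trans_lt (lt_add_one _)
    rcases h with h | h
    · exact hRr.trans_le (h.trans (abs_le_sqrt (le_add_of_nonneg_right (sq_nonneg v))))
    · exact hRr.trans_le (h.trans (abs_le_sqrt (le_add_of_nonneg_left (sq_nonneg u))))
  have hL (x u v) (h : r ≤ |u| ∨ r ≤ |v|) : circleGen σ f (x, u, v) = 0 :=
    circleGen_eqOn_zero hU hfU (hrU x u v h)
  have hf₀ (x u v) (h : r ≤ |u| ∨ r ≤ |v|) : f (x, u, v) = 0 := hfU (hrU x u v h)
  have hr : r ≤ |-r| ∧ r ≤ |r| := by simp [abs_neg, le_abs_self]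
  rw [integral_integral_eq_intervalIntegral (r := r) fun u v h => by simp [hL _ u v h]]
  simp only [circleGen_mul_exp hf]
  refine iteratedIntegral_divergence_eq_zero (contDiff_circleFluxX hf)
    (contDiff_circleFluxU (hf.of_le one_le_two)) (contDiff_circleFluxV (hf.of_le one_le_two))
    (fun u v => by simpa using (circleFluxX_add_two_pi hper 0 u v).symm)
    (fun x v => ?_) (fun x u => ?_)
  · simp [circleFluxU, hf₀ x _ v (.inl hr.1), hf₀ x _ v (.inl hr.2)]
  · simp [circleFluxV, hf₀ x u _ (.inr hr.1), hf₀ x u _ (.inr hr.2)]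

/-- the probability measure
`μ = (dx/2π) ⊗ (e^{−u²/2}/√(2π)) du ⊗ (e^{−v²/2}/√(2π)) dv` on `S¹ × ℝ²` is
infinitesimally invariant for the generator `L` of the self-repelling
diffusion on the circle: for every `C²` function `f` on `ℝ³` that is
`2π`-periodic in `x` and compactly supported in `(u,v)`,
`∫_{ℝ²} ∫_0^{2π} Lf(x,u,v)·e^{−(u²+v²)/2} dx du dv = 0`. -/
theorem stmt_19 (σ : ℝ) (hσ : 0 < σ) (f : ℝ × ℝ × ℝ → ℝ)
    (hf : ContDiff ℝ 2 f)
    (hper : ∀ x u v : ℝ, f (x + 2 * π, u, v) = f (x, u, v))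
    (hsupp : ∃ R : ℝ, ∀ x u v : ℝ, R < Real.sqrt (u ^ 2 + v ^ 2) → f (x, u, v) = 0) :
    (∫ u : ℝ, ∫ v : ℝ, ∫ x in (0:ℝ)..(2 * π),
        circleGen σ f (x, u, v) * Real.exp (-(u ^ 2 + v ^ 2) / 2)) = 0 :=
  stmt_19_general σ f hf hper hsupp
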